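/- Let ρ be a unital *-endomorphism of a unital C*-algebra A with a weak permutation symmetry ε, let d ≥ 2, and let R_1,…,R_m ∈ A satisfy: R_i·a = ρ^d(a)·R_i for all a ∈ A; ε(d,1)·R_i = ρ(R_i); P_{ε,d}·R_i = R_i; Σ_i R_i*·R_i = 1; Σ_i R_i·R_i* = P_{ε,d}; and Σ_i R_i*·ρ(R_i) = (−1)^{d−1}·d^{−1}·1. Define φ : A → A by φ(a) := Σ_i R_i*·ρ^{d−1}(a)·R_i. Then φ is a unital positive left inverse of ρ, i.e. φ(1) = 1, φ(ρ(a)·b·ρ(c)) = a·φ(b)·c for all a,b,c ∈ A (in particular φ(ρ(a)) = a), and φ(ε(1,1)) = d^{−1}·1. (Consequently the weak permutation symmetry of a weakly special endomorphism has rank d.) -/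

import Mathlib

/-- The predicate defining the group `ℙ_∞`: a permutation of `ℕ` belongs to `ℙ_∞`
iff it moves only finitely many points. -/
def HasFiniteSupp (p : Equiv.Perm ℕ) : Prop := {x : ℕ | p x ≠ x}.Finite

/-- Auxiliary function for the shift. -/
def shiftFun (f : ℕ → ℕ) : ℕ → ℕ
  | 0 => 0
  | n + 1 => f n + 1

/-- The shift `𝕊` on permutations of `ℕ` (`0`-indexed): `(𝕊p)(0) = 0`,
`(𝕊p)(n+1) = p(n)+1`. -/
def shiftPerm (p : Equiv.Perm ℕ) : Equiv.Perm ℕ where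
  toFun := shiftFun p
  invFun := shiftFun p.symm
  left_inv := by intro n; cases n <;> simp [shiftFun]
  right_inv := by intro n; cases n <;> simp [shiftFun]

/-- Auxiliary function for the block permutation. -/
def blockFun (r s : ℕ) (n : ℕ) : ℕ :=
  if n < r then n + s else if n < r + s then n - r else n

/-- The block permutation `(r,s) ∈ ℙ_{r+s}` permuting the first `r` terms with the
remaining `s` (`0`-indexed: `i ↦ i+s` for `i < r`, `i ↦ i-r` for `r ≤ i < r+s`,
fixing all other points). -/
def blockPerm (r s : ℕ) : Equiv.Perm ℕ where
  toFun := blockFun r s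
  invFun := blockFun s r
  left_inv := by intro n; simp only [blockFun]; split_ifs <;> omega
  right_inv := by intro n; simp only [blockFun]; split_ifs <;> omega

/-- A weak permutation symmetry for the unital *-endomorphism `ρ` of `A`: a group
homomorphism `p ↦ ε(p)` from `ℙ_∞` into the unitary group of `A` such that
`ε(𝕊p) = ρ(ε(p))` for all `p ∈ ℙ_∞` and `ε(p) ∈ (ρ^n, ρ^n)` for all `p ∈ ℙ_n`
(where `ℙ_n` is the subgroup of permutations fixing every point out of the first `n`). -/
structure WeakPermSymm {A : Type*} [NormedRing A] [StarRing A] [CStarRing A]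
    [CompleteSpace A] [NormedAlgebra ℂ A] [StarModule ℂ A]
    (ρ : A →⋆ₐ[ℂ] A) (ε : Equiv.Perm ℕ → A) : Prop where
  map_one : ε 1 = 1
  map_mul : ∀ p q : Equiv.Perm ℕ, HasFiniteSupp p → HasFiniteSupp q →
    ε (p * q) = ε p * ε q
  mem_unitary : ∀ p : Equiv.Perm ℕ, HasFiniteSupp p → ε p ∈ unitary A
  shift : ∀ p : Equiv.Perm ℕ, HasFiniteSupp p → ε (shiftPerm p) = ρ (ε p)
  comm : ∀ (n : ℕ) (p : Equiv.Perm ℕ), (∀ m : ℕ, n ≤ m → p m = m) →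
    ∀ a : A, ε p * (⇑ρ)^[n] a = (⇑ρ)^[n] a * ε p

variable {A : Type*} [NormedRing A] [StarRing A] [CStarRing A] [CompleteSpace A]
  [NormedAlgebra ℂ A] [StarModule ℂ A]

/-- The intertwiner space `(ρ^r, ρ^s) := {t ∈ A : ρ^s(a)·t = t·ρ^r(a) ∀ a ∈ A}`. -/
def IsIntertwiner (ρ : A →⋆ₐ[ℂ] A) (r s : ℕ) (t : A) : Prop :=
  ∀ a : A, (⇑ρ)^[s] a * t = t * (⇑ρ)^[r] a

/-- The symmetry intertwiner space
`(ρ^r, ρ^s)_ε := {t ∈ (ρ^r, ρ^s) : ε(s,1)·t = ρ(t)·ε(r,1)}`. -/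
def IsSymIntertwiner (ρ : A →⋆ₐ[ℂ] A) (ε : Equiv.Perm ℕ → A) (r s : ℕ) (t : A) : Prop :=
  IsIntertwiner ρ r s t ∧ ε (blockPerm s 1) * t = ρ t * ε (blockPerm r 1)

/-- The embedding of the permutation group of `d` objects into `Equiv.Perm ℕ`; its
range is exactly the subgroup `ℙ_d` of finitely supported permutations of `ℕ` fixing
every point out of the first `d`. -/
def permOfFin (d : ℕ) (q : Equiv.Perm (Fin d)) : Equiv.Perm ℕ :=
  q.extendDomain Fin.equivSubtype

/-- The totally antisymmetric element
`P_{ε,d} := (d!)⁻¹ · Σ_{p ∈ ℙ_d} sign(p)·ε(p)`. -/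
noncomputable def Peps (ε : Equiv.Perm ℕ → A) (d : ℕ) : A :=
  ((d.factorial : ℂ))⁻¹ •
    ∑ q : Equiv.Perm (Fin d), ((Equiv.Perm.sign q : ℤ) : ℂ) • ε (permOfFin d q)

section FinSupp

lemma hasFiniteSupp_of_bdd {p : Equiv.Perm ℕ} {n : ℕ} (h : ∀ m, n ≤ m → p m = m) :
    HasFiniteSupp p :=
  (Set.finite_Iio n).subset fun x hx => by
    by_contra hx'
    exact hx (h x (le_of_not_gt hx'))

lemma blockPerm_fix (r s : ℕ) : ∀ m, r + s ≤ m → blockPerm r s m = m := by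
  intro m hm
  show blockFun r s m = m
  unfold blockFun
  split_ifs <;> omega

lemma hasFiniteSupp_blockPerm (r s : ℕ) : HasFiniteSupp (blockPerm r s) :=
  hasFiniteSupp_of_bdd (blockPerm_fix r s)

lemma permOfFin_fix (d : ℕ) (q : Equiv.Perm (Fin d)) : ∀ m, d ≤ m → permOfFin d q m = m :=
  fun m hm => Equiv.Perm.extendDomain_apply_not_subtype _ _ (not_lt.mpr hm)

lemma hasFiniteSupp_permOfFin (d : ℕ) (q : Equiv.Perm (Fin d)) :
    HasFiniteSupp (permOfFin d q) :=
  hasFiniteSupp_of_bdd (permOfFin_fix d q)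

lemma permOfFin_apply (d : ℕ) (q : Equiv.Perm (Fin d)) {n : ℕ} (h : n < d) :
    permOfFin d q n = (q ⟨n, h⟩ : ℕ) := by
  have h2 := Equiv.Perm.extendDomain_apply_subtype q Fin.equivSubtype (b := n) h
  unfold permOfFin
  simpa [Fin.equivSubtype] using h2

lemma hasFiniteSupp_swap (a b : ℕ) : HasFiniteSupp (Equiv.swap a b) := by
  apply hasFiniteSupp_of_bdd (n := max a b + 1)
  intro m hm
  apply Equiv.swap_apply_of_ne_of_ne <;> omega

lemma HasFiniteSupp.inv {p : Equiv.Perm ℕ} (hp : HasFiniteSupp p) : HasFiniteSupp p⁻¹ := by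
  have h : {x : ℕ | p⁻¹ x ≠ x} = {x : ℕ | p x ≠ x} := by
    ext x
    simp only [Set.mem_setOf_eq, ne_eq, not_iff_not]
    constructor
    · intro hx; conv_lhs => rw [← hx]; simp
    · intro hx; conv_lhs => rw [← hx]; simp
  unfold HasFiniteSupp
  rw [h]
  exact hp

end FinSupp

section PermLemmas

lemma blockPerm_one_one : blockPerm 1 1 = Equiv.swap 0 1 := by
  ext n
  show blockFun 1 1 n = _
  rw [Equiv.swap_apply_def]
  unfold blockFun
  split_ifs <;> omega

lemma shiftPerm_swap (a b : ℕ) : shiftPerm (Equiv.swap a b) = Equiv.swap (a + 1) (b + 1) := by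
  ext n
  cases n with
  | zero =>
    have h0 : Equiv.swap (a + 1) (b + 1) 0 = 0 :=
      Equiv.swap_apply_of_ne_of_ne (by omega) (by omega)
    rw [h0]
    rfl
  | succ m =>
    show Equiv.swap a b m + 1 = Equiv.swap (a + 1) (b + 1) (m + 1)
    rw [Equiv.swap_apply_def, Equiv.swap_apply_def]
    split_ifs <;> omega

lemma blockPerm_decomp (k : ℕ) :
    blockPerm (k + 2) 1 = permOfFin (k + 2) (finRotate (k + 2)) * Equiv.swap (k + 1) (k + 2) := by
  ext n
  rw [Equiv.Perm.mul_apply, Equiv.swap_apply_def]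
  split_ifs with h1 h2
  · subst h1
    rw [permOfFin_fix _ _ _ le_rfl]
    show blockFun (k + 2) 1 (k + 1) = k + 2
    unfold blockFun
    split_ifs <;> omega
  · subst h2
    rw [permOfFin_apply _ _ (show k + 1 < k + 2 by omega)]
    have hval : (finRotate (k + 2)) ⟨k + 1, by omega⟩ = ⟨0, by omega⟩ := by
      rw [finRotate_succ_apply]
      ext
      rw [Fin.val_add_one]
      simp [Fin.last]
    rw [hval]
    show blockFun (k + 2) 1 (k + 2) = 0
    unfold blockFun
    split_ifs <;> omega
  · by_cases hn : n < k + 2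
    · rw [permOfFin_apply _ _ hn]
      have hval : ((finRotate (k + 2)) ⟨n, hn⟩ : ℕ) = n + 1 := by
        rw [finRotate_succ_apply, Fin.val_add_one]
        split_ifs with h
        · exfalso
          apply h1
          have := congrArg Fin.val h
          simpa [Fin.last] using this
        · rfl
      rw [hval]
      show blockFun (k + 2) 1 n = n + 1
      unfold blockFun
      split_ifs <;> omega
    · rw [permOfFin_fix _ _ _ (by omega)]
      show blockFun (k + 2) 1 n = n
      unfold blockFun
      split_ifs <;> omega

end PermLemmas

section AlgHelpers

lemma iterHom_mul (ρ : A →⋆ₐ[ℂ] A) (n : ℕ) (a b : A) :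
    (⇑ρ)^[n] (a * b) = (⇑ρ)^[n] a * (⇑ρ)^[n] b := by
  induction n generalizing a b with
  | zero => rfl
  | succ k ih => simp only [Function.iterate_succ_apply, map_mul, ih]

lemma iterHom_one (ρ : A →⋆ₐ[ℂ] A) (n : ℕ) : (⇑ρ)^[n] (1 : A) = 1 := by
  induction n with
  | zero => rfl
  | succ k ih => simp only [Function.iterate_succ_apply, map_one, ih]

lemma iterHom_star (ρ : A →⋆ₐ[ℂ] A) (n : ℕ) (a : A) :
    (⇑ρ)^[n] (star a) = star ((⇑ρ)^[n] a) := by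
  induction n generalizing a with
  | zero => rfl
  | succ k ih => simp only [Function.iterate_succ_apply, map_star, ih]

lemma WeakPermSymm.star_eps {ρ : A →⋆ₐ[ℂ] A} {ε : Equiv.Perm ℕ → A}
    (hws : WeakPermSymm ρ ε) {p : Equiv.Perm ℕ} (hp : HasFiniteSupp p) :
    star (ε p) = ε p⁻¹ := by
  have h1 : ε p * ε p⁻¹ = 1 := by
    rw [← hws.map_mul p p⁻¹ hp hp.inv, mul_inv_cancel, hws.map_one]
  have h2 : star (ε p) * ε p = 1 := (Unitary.mem_iff.mp (hws.mem_unitary p hp)).1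
  calc star (ε p) = star (ε p) * (ε p * ε p⁻¹) := by rw [h1, mul_one]
    _ = ε p⁻¹ := by rw [← mul_assoc, h2, one_mul]

lemma Peps_star {ρ : A →⋆ₐ[ℂ] A} {ε : Equiv.Perm ℕ → A} (hws : WeakPermSymm ρ ε) (d : ℕ) :
    star (Peps ε d) = Peps ε d := by
  unfold Peps
  rw [star_smul, star_sum]
  have hc : star (((d.factorial : ℂ))⁻¹) = ((d.factorial : ℂ))⁻¹ := by simp
  rw [hc]
  congr 1
  calc ∑ q : Equiv.Perm (Fin d), star (((Equiv.Perm.sign q : ℤ) : ℂ) • ε (permOfFin d q))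
      = ∑ q : Equiv.Perm (Fin d),
        ((Equiv.Perm.sign q⁻¹ : ℤ) : ℂ) • ε (permOfFin d q⁻¹) := by
        refine Finset.sum_congr rfl fun q _ => ?_
        rw [star_smul, hws.star_eps (hasFiniteSupp_permOfFin d q)]
        rw [show (permOfFin d q)⁻¹ = permOfFin d q⁻¹ from rfl]
        rw [Equiv.Perm.sign_inv]
        congr 1
        simp
    _ = ∑ q : Equiv.Perm (Fin d), ((Equiv.Perm.sign q : ℤ) : ℂ) • ε (permOfFin d q) :=
        Fintype.sum_bijective (·⁻¹) inv_involutive.bijective _ _ (fun x => rfl)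

lemma Peps_mul_eps {ρ : A →⋆ₐ[ℂ] A} {ε : Equiv.Perm ℕ → A} (hws : WeakPermSymm ρ ε)
    (d : ℕ) (q : Equiv.Perm (Fin d)) :
    Peps ε d * ε (permOfFin d q) = ((Equiv.Perm.sign q : ℤ) : ℂ) • Peps ε d := by
  have hq2 : ((Equiv.Perm.sign q : ℤ) : ℂ) * ((Equiv.Perm.sign q : ℤ) : ℂ) = 1 := by
    have h : Equiv.Perm.sign q * Equiv.Perm.sign q = 1 := by
      exact_mod_cast Int.units_mul_self (Equiv.Perm.sign q)
    have h2 := congrArg (fun u : ℤˣ => ((u : ℤ) : ℂ)) h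
    simp only [Units.val_mul, Int.cast_mul, Units.val_one, Int.cast_one] at h2
    exact h2
  unfold Peps
  rw [smul_mul_assoc, smul_comm ((Equiv.Perm.sign q : ℤ) : ℂ) (((d.factorial : ℂ))⁻¹)]
  congr 1
  rw [Finset.sum_mul]
  calc ∑ p : Equiv.Perm (Fin d),
        (((Equiv.Perm.sign p : ℤ) : ℂ) • ε (permOfFin d p)) * ε (permOfFin d q)
      = ∑ p : Equiv.Perm (Fin d), ((Equiv.Perm.sign q : ℤ) : ℂ) •
          (((Equiv.Perm.sign (p * q) : ℤ) : ℂ) • ε (permOfFin d (p * q))) := by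
        refine Finset.sum_congr rfl fun p _ => ?_
        rw [smul_mul_assoc,
          ← hws.map_mul _ _ (hasFiniteSupp_permOfFin d p) (hasFiniteSupp_permOfFin d q)]
        rw [show permOfFin d p * permOfFin d q = permOfFin d (p * q) from
          Equiv.Perm.extendDomain_mul _ p q]
        rw [smul_smul]
        congr 1
        rw [show ((Equiv.Perm.sign (p * q) : ℤ) : ℂ)
            = ((Equiv.Perm.sign p : ℤ) : ℂ) * ((Equiv.Perm.sign q : ℤ) : ℂ) by
          rw [Equiv.Perm.sign_mul]; push_cast [Units.val_mul]; ring]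
        rw [mul_left_comm, hq2, mul_one]
    _ = ((Equiv.Perm.sign q : ℤ) : ℂ) • ∑ p : Equiv.Perm (Fin d),
          ((Equiv.Perm.sign (p * q) : ℤ) : ℂ) • ε (permOfFin d (p * q)) :=
        (Finset.smul_sum).symm
    _ = ((Equiv.Perm.sign q : ℤ) : ℂ) • ∑ p : Equiv.Perm (Fin d),
          ((Equiv.Perm.sign p : ℤ) : ℂ) • ε (permOfFin d p) := by
        congr 1
        exact Fintype.sum_bijective (· * q) (Group.mulRight_bijective q) _ _ (fun x => rfl)

lemma eps_swap_iter {ρ : A →⋆ₐ[ℂ] A} {ε : Equiv.Perm ℕ → A} (hws : WeakPermSymm ρ ε)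
    (k : ℕ) : ε (Equiv.swap k (k + 1)) = (⇑ρ)^[k] (ε (Equiv.swap 0 1)) := by
  induction k with
  | zero => rfl
  | succ j ih =>
    rw [show Equiv.swap (j + 1) (j + 1 + 1) = shiftPerm (Equiv.swap j (j + 1)) from
        (shiftPerm_swap j (j + 1)).symm,
      hws.shift _ (hasFiniteSupp_swap j (j + 1)), ih]
    exact (Function.iterate_succ_apply' (⇑ρ) j (ε (Equiv.swap 0 1))).symm

end AlgHelpers


/-- Let `ρ` be a unital *-endomorphism of a unital C*-algebra `A` with
a weak permutation symmetry `ε`, let `d ≥ 2`, and let `R_1, …, R_m ∈ A` be a normalized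
set of generators of a Hilbert bimodule implementing the special conjugate property:
`R_i·a = ρ^d(a)·R_i`, `ε(d,1)·R_i = ρ(R_i)`, `P_{ε,d}·R_i = R_i`, `Σ_i R_i*·R_i = 1`,
`Σ_i R_i·R_i* = P_{ε,d}` and `Σ_i R_i*·ρ(R_i) = (−1)^{d−1}·d⁻¹·1`.  Define
`φ(a) := Σ_i R_i*·ρ^{d−1}(a)·R_i`.  Then `φ` is a unital positive left inverse of `ρ`:
`φ(1) = 1`, `φ(ρ(a)·b·ρ(c)) = a·φ(b)·c` (in particular `φ(ρ(a)) = a`), `φ` maps positive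
elements to positive elements, and `φ(ε(1,1)) = d⁻¹·1`.  (Consequently the weak
permutation symmetry of a weakly special endomorphism has rank `d`.) -/
theorem left_inverse_of_special_conjugate
    (ρ : A →⋆ₐ[ℂ] A) (ε : Equiv.Perm ℕ → A) (hws : WeakPermSymm ρ ε)
    (d : ℕ) (hd : 2 ≤ d) (m : ℕ) (R : Fin m → A)
    (hR1 : ∀ (i : Fin m) (a : A), R i * a = (⇑ρ)^[d] a * R i)
    (hR2 : ∀ i : Fin m, ε (blockPerm d 1) * R i = ρ (R i))
    (hR3 : ∀ i : Fin m, Peps ε d * R i = R i)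
    (hR4 : ∑ i, star (R i) * R i = 1)
    (hR5 : ∑ i, R i * star (R i) = Peps ε d)
    (hR6 : ∑ i, star (R i) * ρ (R i) = ((-1 : ℂ) ^ (d - 1) * (d : ℂ)⁻¹) • 1)
    (φ : A → A) (hφ : ∀ a : A, φ a = ∑ i, star (R i) * (⇑ρ)^[d - 1] a * R i) :
    φ 1 = 1 ∧
    (∀ a b c : A, φ (ρ a * b * ρ c) = a * φ b * c) ∧
    (∀ a : A, φ (ρ a) = a) ∧
    (∀ a : A, ∃ b : A, φ (star a * a) = star b * b) ∧
    φ (ε (blockPerm 1 1)) = ((d : ℂ))⁻¹ • 1 := by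
  obtain ⟨k, rfl⟩ : ∃ k, d = k + 2 := ⟨d - 2, by omega⟩
  clear hd
  have hφ' : ∀ a : A, φ a = ∑ i, star (R i) * (⇑ρ)^[k + 1] a * R i := hφ
  -- starred version of hR1
  have hR1' : ∀ (i : Fin m) (a : A), star (R i) * (⇑ρ)^[k + 2] a = a * star (R i) := by
    intro i a
    have h := congrArg star (hR1 i (star a))
    rw [star_mul, star_star, star_mul, iterHom_star, star_star] at h
    exact h.symm
  have hstep : ∀ x : A, (⇑ρ)^[k + 1] (ρ x) = (⇑ρ)^[k + 2] x := fun x =>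
    (Function.iterate_succ_apply (⇑ρ) (k + 1) x).symm
  have part1 : φ 1 = 1 := by
    rw [hφ']
    simp only [iterHom_one, mul_one]
    exact hR4
  have part2 : ∀ a b c : A, φ (ρ a * b * ρ c) = a * φ b * c := by
    intro a b c
    rw [hφ', hφ' b, Finset.mul_sum, Finset.sum_mul]
    refine Finset.sum_congr rfl fun i _ => ?_
    rw [iterHom_mul, iterHom_mul, hstep a, hstep c]
    simp only [← mul_assoc]
    rw [hR1' i a, mul_assoc _ ((⇑ρ)^[k + 2] c) (R i), ← hR1 i c]
    simp only [← mul_assoc]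
  have part3 : ∀ a : A, φ (ρ a) = a := by
    intro a
    have h : ρ a = ρ a * 1 * ρ 1 := by rw [map_one, mul_one, mul_one]
    rw [h, part2, part1, mul_one, mul_one]
  have part4 : ∀ a : A, ∃ b : A, φ (star a * a) = star b * b := by
    intro a
    letI : CStarAlgebra A := {}
    letI := CStarAlgebra.spectralOrder A
    haveI := CStarAlgebra.spectralOrderedRing A
    have hx : 0 ≤ φ (star a * a) := by
      rw [hφ']
      refine Finset.sum_nonneg fun i _ => ?_
      have h : star (R i) * (⇑ρ)^[k + 1] (star a * a) * R i
          = star ((⇑ρ)^[k + 1] a * R i) * ((⇑ρ)^[k + 1] a * R i) := by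
        simp only [iterHom_mul, iterHom_star, star_mul, mul_assoc]
      rw [h]
      exact star_mul_self_nonneg _
    exact ⟨CFC.sqrt (φ (star a * a)),
      by rw [(CFC.sqrt_nonneg (φ (star a * a))).isSelfAdjoint.star_eq,
        CFC.sqrt_mul_sqrt_self _ hx]⟩
  refine ⟨part1, part2, part3, part4, ?_⟩
  -- Part 5
  have hP_star : star (Peps ε (k + 2)) = Peps ε (k + 2) := Peps_star hws (k + 2)
  have hRP : ∀ i, star (R i) * Peps ε (k + 2) = star (R i) := by
    intro i
    have h := congrArg star (hR3 i)
    rw [star_mul, hP_star] at h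
    exact h
  have hsign2 : ((-1 : ℂ) ^ (k + 1)) * ((-1 : ℂ) ^ (k + 1)) = 1 := by
    rw [← pow_add]
    exact Even.neg_one_pow ⟨k + 1, rfl⟩
  have hfin : ((Equiv.Perm.sign (finRotate (k + 2)) : ℤ) : ℂ) = (-1 : ℂ) ^ (k + 1) := by
    have h : Equiv.Perm.sign (finRotate (k + 2)) = (-1 : ℤˣ) ^ (k + 1) := sign_finRotate (k + 2)
    rw [h]
    push_cast
    norm_num
  have heps_decomp : ε (blockPerm (k + 2) 1)
      = ε (permOfFin (k + 2) (finRotate (k + 2))) * ε (Equiv.swap (k + 1) (k + 2)) := by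
    rw [blockPerm_decomp k,
      hws.map_mul _ _ (hasFiniteSupp_permOfFin _ _) (hasFiniteSupp_swap _ _)]
  have hkey : ∀ i, star (R i) * ε (Equiv.swap (k + 1) (k + 2))
      = ((-1 : ℂ) ^ (k + 1)) • (star (R i) * ε (blockPerm (k + 2) 1)) := by
    intro i
    have h1 : star (R i) * ε (permOfFin (k + 2) (finRotate (k + 2)))
        = ((-1 : ℂ) ^ (k + 1)) • star (R i) := by
      calc star (R i) * ε (permOfFin (k + 2) (finRotate (k + 2)))
          = star (R i) * (Peps ε (k + 2) * ε (permOfFin (k + 2) (finRotate (k + 2)))) := by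
            rw [← mul_assoc, hRP i]
        _ = star (R i)
            * (((Equiv.Perm.sign (finRotate (k + 2)) : ℤ) : ℂ) • Peps ε (k + 2)) := by
            rw [Peps_mul_eps hws]
        _ = ((-1 : ℂ) ^ (k + 1)) • (star (R i) * Peps ε (k + 2)) := by
            rw [hfin, mul_smul_comm]
        _ = ((-1 : ℂ) ^ (k + 1)) • star (R i) := by rw [hRP i]
    have h2 : star (R i) * ε (blockPerm (k + 2) 1)
        = ((-1 : ℂ) ^ (k + 1)) • (star (R i) * ε (Equiv.swap (k + 1) (k + 2))) := by
      rw [heps_decomp, ← mul_assoc, h1, smul_mul_assoc]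
    rw [h2, smul_smul, hsign2, one_smul]
  have hiter : (⇑ρ)^[k + 1] (ε (blockPerm 1 1)) = ε (Equiv.swap (k + 1) (k + 2)) := by
    rw [blockPerm_one_one]
    exact (eps_swap_iter hws (k + 1)).symm
  rw [hφ']
  calc ∑ i, star (R i) * (⇑ρ)^[k + 1] (ε (blockPerm 1 1)) * R i
      = ∑ i, ((-1 : ℂ) ^ (k + 1)) • (star (R i) * (ε (blockPerm (k + 2) 1) * R i)) := by
        refine Finset.sum_congr rfl fun i _ => ?_
        rw [hiter, hkey i, smul_mul_assoc, mul_assoc]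
    _ = ((-1 : ℂ) ^ (k + 1)) • ∑ i, star (R i) * ρ (R i) := by
        rw [← Finset.smul_sum]
        congr 1
        refine Finset.sum_congr rfl fun i _ => by rw [hR2 i]
    _ = (((k + 2 : ℕ) : ℂ))⁻¹ • 1 := by
        rw [hR6, smul_smul]
        congr 1
        rw [show k + 2 - 1 = k + 1 from rfl, ← mul_assoc, hsign2, one_mul]
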